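/- arXiv:1909.10858 — 2 statements merged into one kernel-verified Lean document; each statement's English description precedes it below -/
import Mathlib

section
/- For every real 3×3 matrix F with det F > 0 the Neo-Hookean free energy density ψ₀ is Fréchet differentiable at F, and its derivative in an arbitrary matrix direction H equals trace(P₀(F)ᵀ * H); equivalently, the gradient of ψ₀ with respect to the Frobenius inner product is the first Piola–Kirchhoff stress P₀(F) = μ(F − (det F)^(−β) F⁻ᵀ). -/
open Matrix

noncomputable section

attribute [local instance]
  Matrix.frobeniusNormedAddCommGroup Matrix.frobeniusNormedSpace

/-- The Neo-Hookean free energy density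
`ψ₀(F) = (μ/2)(trace(Fᵀ F) − 3) + (μ/β)((det F)^(−β) − 1)`. -/
def neoHookeanEnergy (μ β : ℝ) (F : Matrix (Fin 3) (Fin 3) ℝ) : ℝ :=
  μ / 2 * ((Fᵀ * F).trace - 3) + μ / β * (F.det ^ (-β) - 1)

/-- The first Piola–Kirchhoff stress `P₀(F) = μ (F − (det F)^(−β) F⁻ᵀ)`. -/
def firstPiolaKirchhoff (μ β : ℝ) (F : Matrix (Fin 3) (Fin 3) ℝ) :
    Matrix (Fin 3) (Fin 3) ℝ :=
  μ • (F - F.det ^ (-β) • (F⁻¹)ᵀ)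

/-! The stretch term `trace (Fᵀ F)` is the Frobenius pairing `⟨F, F⟩`, so its derivative is
`H ↦ 2 ⟨F, H⟩`. The determinant is multilinear in the rows, so its derivative in direction `H`
is the sum of the determinants of `F` with one row replaced by the corresponding row of `H`;
expanding each along the replaced row gives Jacobi's formula `D det(F) H = ⟨(adj F)ᵀ, H⟩`, and
`(adj F)ᵀ = det F • F⁻ᵀ`. The chain rule through `x ↦ x ^ (-β)` then turns the derivative of
the volumetric term into `-μ (det F) ^ (-β) ⟨F⁻ᵀ, H⟩`. -/

namespace Matrix

variable {m n : Type*} [Fintype m] [Fintype n]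

def frobeniusInner : Matrix m n ℝ →L[ℝ] Matrix m n ℝ →L[ℝ] ℝ :=
  LinearMap.toContinuousLinearMap <| LinearMap.toContinuousLinearMap.toLinearMap ∘ₗ
    LinearMap.mk₂ ℝ (fun A B => (Aᵀ * B).trace)
      (fun _ _ _ => by simp [Matrix.add_mul])
      (fun _ _ _ => by simp)
      (fun _ _ _ => by simp [Matrix.mul_add])
      (fun _ _ _ => by simp)

lemma frobeniusInner_apply (A B : Matrix m n ℝ) : frobeniusInner A B = (Aᵀ * B).trace := rfl

lemma frobeniusInner_comm (A B : Matrix m n ℝ) : frobeniusInner A B = frobeniusInner B A := by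
  rw [frobeniusInner_apply, frobeniusInner_apply, ← trace_transpose, transpose_mul,
    transpose_transpose]

lemma hasFDerivAt_trace_transpose_mul_self (F : Matrix m n ℝ) :
    HasFDerivAt (fun M : Matrix m n ℝ => (Mᵀ * M).trace) ((2 : ℝ) • frobeniusInner F) F := by
  refine (frobeniusInner.hasFDerivAt_of_bilinear (hasFDerivAt_id F)
    (hasFDerivAt_id F)).congr_fderiv ?_
  ext H
  change frobeniusInner F H + frobeniusInner H F = ((2 : ℝ) • frobeniusInner F) H
  rw [frobeniusInner_comm H F, two_smul, _root_.add_apply]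

variable [DecidableEq n]

lemma det_updateRow_eq_sum_adjugate {R : Type*} [CommRing R] (F : Matrix n n R) (i : n)
    (v : n → R) : (F.updateRow i v).det = ∑ j, F.adjugate j i * v j := by
  rw [← det_transpose, ← updateCol_transpose, ← cramer_apply, cramer_eq_adjugate_mulVec,
    ← adjugate_transpose]
  simp [mulVec, dotProduct]

def detContinuousMultilinear : ContinuousMultilinearMap ℝ (fun _ : n => n → ℝ) ℝ :=
  { (detRowAlternating : (n → ℝ) [⋀^n]→ₗ[ℝ] ℝ).toMultilinearMap with
    cont := continuous_id.matrix_det }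

lemma hasFDerivAt_det (F : Matrix n n ℝ) :
    HasFDerivAt (fun M : Matrix n n ℝ => M.det) (frobeniusInner F.adjugateᵀ) F := by
  let rows : Matrix n n ℝ →L[ℝ] (n → n → ℝ) :=
    LinearMap.toContinuousLinearMap (ofLinearEquiv ℝ).symm.toLinearMap
  refine ((detContinuousMultilinear.hasFDerivAt (rows F)).comp F
    rows.hasFDerivAt).congr_fderiv ?_
  ext H
  change detContinuousMultilinear.linearDeriv (of.symm F) (of.symm H) = _
  rw [ContinuousMultilinearMap.linearDeriv_apply]
  change ∑ i, (F.updateRow i (H i)).det = (F.adjugate * H).trace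
  simp only [det_updateRow_eq_sum_adjugate, trace, diag, mul_apply]
  exact Finset.sum_comm

end Matrix

lemma firstPiolaKirchhoff_eq_adjugate (μ β : ℝ) (F : Matrix (Fin 3) (Fin 3) ℝ)
    (hF : F.det ≠ 0) :
    firstPiolaKirchhoff μ β F = μ • F - (μ * F.det ^ (-β - 1)) • F.adjugateᵀ := by
  rw [firstPiolaKirchhoff, inv_def, Ring.inverse_eq_inv', transpose_smul, smul_smul,
    Real.rpow_sub_one hF, smul_sub, smul_smul]
  congr 2

theorem neoHookeanEnergy_hasFDerivAt_general (μ β : ℝ) (hβ : β ≠ 0)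
    (F : Matrix (Fin 3) (Fin 3) ℝ) (hF : 0 < F.det) :
    ∃ L : Matrix (Fin 3) (Fin 3) ℝ →L[ℝ] ℝ,
      HasFDerivAt (neoHookeanEnergy μ β) L F ∧
      ∀ H : Matrix (Fin 3) (Fin 3) ℝ,
        L H = ((firstPiolaKirchhoff μ β F)ᵀ * H).trace := by
  refine ⟨frobeniusInner (firstPiolaKirchhoff μ β F), ?_, fun H => rfl⟩
  have hpow : HasDerivAt (fun x : ℝ => x ^ (-β)) (-β * F.det ^ (-β - 1)) F.det :=
    Real.hasDerivAt_rpow_const (Or.inl hF.ne')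
  have hstretch := ((hasFDerivAt_trace_transpose_mul_self F).sub_const 3).const_mul (μ / 2)
  have hvolume := ((hpow.comp_hasFDerivAt F (hasFDerivAt_det F)).sub_const 1).const_mul (μ / β)
  refine (hstretch.add hvolume).congr_fderiv ?_
  have hcoeff : μ / β * (-β * F.det ^ (-β - 1)) = -(μ * F.det ^ (-β - 1)) := by
    field_simp
  ext H
  change μ / 2 * (2 * frobeniusInner F H) +
      μ / β * (-β * F.det ^ (-β - 1) * frobeniusInner F.adjugateᵀ H) =
    frobeniusInner (firstPiolaKirchhoff μ β F) H
  rw [firstPiolaKirchhoff_eq_adjugate μ β F hF.ne', map_sub, map_smul, map_smul,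
    _root_.sub_apply, _root_.smul_apply, _root_.smul_apply, smul_eq_mul, smul_eq_mul]
  linear_combination frobeniusInner F.adjugateᵀ H * hcoeff

/-- For every real 3×3 matrix `F` with `det F > 0`, the Neo-Hookean free energy
density `ψ₀` is Fréchet differentiable at `F`, and its derivative in an arbitrary
matrix direction `H` equals `trace (P₀(F)ᵀ * H)`; i.e. the gradient of `ψ₀` with
respect to the Frobenius inner product is the first Piola–Kirchhoff stress. -/
theorem neoHookeanEnergy_hasFDerivAt (μ β : ℝ) (hμ : 0 < μ) (hβ : β ≠ 0)
    (F : Matrix (Fin 3) (Fin 3) ℝ) (hF : 0 < F.det) :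
    ∃ L : Matrix (Fin 3) (Fin 3) ℝ →L[ℝ] ℝ,
      HasFDerivAt (neoHookeanEnergy μ β) L F ∧
      ∀ H : Matrix (Fin 3) (Fin 3) ℝ,
        L H = ((firstPiolaKirchhoff μ β F)ᵀ * H).trace :=
  neoHookeanEnergy_hasFDerivAt_general μ β hβ F hF
end
end

section
/- Let Ω ⊆ ℝ³ be a bounded open set and let u, w : ℝ³ → ℝ³ be continuously differentiable vector fields such that det(1 + ∇u(x)) > 0 for every x in the closure of Ω, where ∇u(x) denotes the 3×3 Jacobian matrix of u at x and 1 the identity matrix. Then the function ε ↦ ∫_Ω ψ₀(1 + ∇u(x) + ε ∇w(x)) dx is differentiable at ε = 0 with derivative ∫_Ω trace( P₀(1 + ∇u(x))ᵀ * ∇w(x) ) dx. -/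
open Matrix MeasureTheory Polynomial

noncomputable section

/-- The 3×3 Jacobian matrix `∇u(x)` of a vector field `u : ℝ³ → ℝ³`. -/
def jacobianMatrix (u : EuclideanSpace ℝ (Fin 3) → EuclideanSpace ℝ (Fin 3))
    (x : EuclideanSpace ℝ (Fin 3)) : Matrix (Fin 3) (Fin 3) ℝ :=
  Matrix.of fun i j => fderiv ℝ u x (EuclideanSpace.single j 1) i

abbrev M3 := Matrix (Fin 3) (Fin 3) ℝ

lemma trace_quad (A G : M3) (s : ℝ) :
    ((A + s • G)ᵀ * (A + s • G)).trace =
      (Aᵀ * A).trace + 2 * (Aᵀ * G).trace * s + (Gᵀ * G).trace * s ^ 2 := by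
  have h : (Gᵀ * A).trace = (Aᵀ * G).trace := by
    rw [← Matrix.trace_transpose (Gᵀ * A), Matrix.transpose_mul, Matrix.transpose_transpose]
  simp only [Matrix.transpose_add, Matrix.transpose_smul, Matrix.add_mul, Matrix.mul_add,
    Matrix.smul_mul, Matrix.mul_smul, Matrix.trace_add, Matrix.trace_smul, smul_eq_mul, h]
  ring

lemma line_eq (A G : M3) (t : ℝ) (h : (A + t • G).det ≠ 0) (s : ℝ) :
    A + s • G = (A + t • G) * (1 + (s - t) • ((A + t • G)⁻¹ * G)) := by
  have hinv : (A + t • G) * (A + t • G)⁻¹ = 1 :=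
    Matrix.mul_nonsing_inv _ (isUnit_iff_ne_zero.2 h)
  rw [Matrix.mul_add, Matrix.mul_one, Matrix.mul_smul, ← Matrix.mul_assoc, hinv, Matrix.one_mul]
  rw [add_assoc, ← add_smul]
  ring_nf

lemma hasDerivAt_det_line (A G : M3) (t : ℝ) (h : (A + t • G).det ≠ 0) :
    HasDerivAt (fun s : ℝ => (A + s • G).det)
      ((A + t • G).det * ((A + t • G)⁻¹ * G).trace) t := by
  set N : M3 := (A + t • G)⁻¹ * G with hN
  set p : Polynomial ℝ := (Matrix.det (1 + (X : ℝ[X]) • N.map C)).divX.divX with hp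
  have key : ∀ s : ℝ, (A + s • G).det =
      (A + t • G).det * (1 + N.trace * (s - t) + p.eval (s - t) * (s - t) ^ 2) := by
    intro s
    rw [line_eq A G t h s, Matrix.det_mul, Matrix.det_one_add_smul]
  have h1 : HasDerivAt (fun s : ℝ => s - t) 1 t := (hasDerivAt_id t).sub_const t
  have h2 : HasDerivAt (fun s : ℝ => p.eval (s - t)) ((p.comp (X - C t)).derivative.eval t) t := by
    have := (p.comp (X - C t)).hasDerivAt t
    simpa only [Polynomial.eval_comp, Polynomial.eval_sub, Polynomial.eval_X,
      Polynomial.eval_C] using this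
  have h3 : HasDerivAt (fun s : ℝ => (s - t) ^ 2) (2 * (t - t) ^ 1 * 1) t := by
    simpa using h1.fun_pow 2
  have h4 : HasDerivAt
      (fun s : ℝ => (A + t • G).det * (1 + N.trace * (s - t) + p.eval (s - t) * (s - t) ^ 2))
      ((A + t • G).det * ((0 + N.trace * 1) +
        ((p.comp (X - C t)).derivative.eval t * (t - t) ^ 2 + p.eval (t - t) * (2 * (t - t) ^ 1 * 1)))) t := by
    exact (((hasDerivAt_const t (1:ℝ)).add (h1.const_mul N.trace)).add (h2.mul h3)).const_mul _
  rw [show (fun s : ℝ => (A + s • G).det) =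
      fun s => (A + t • G).det * (1 + N.trace * (s - t) + p.eval (s - t) * (s - t) ^ 2)
    from funext key]
  convert h4 using 1
  simp [sub_self]

lemma hasDerivAt_energy_line (μ β : ℝ) (hβ : β ≠ 0) (A G : M3) (t : ℝ)
    (h : 0 < (A + t • G).det) :
    HasDerivAt (fun s : ℝ => neoHookeanEnergy μ β (A + s • G))
      (((firstPiolaKirchhoff μ β (A + t • G))ᵀ * G).trace) t := by
  have hdet := hasDerivAt_det_line A G t h.ne'
  have hr : HasDerivAt (fun y : ℝ => y ^ (-β)) (-β * (A + t • G).det ^ (-β - 1))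
      ((A + t • G).det) := Real.hasDerivAt_rpow_const (Or.inl h.ne')
  have h2 : HasDerivAt (fun s : ℝ => (A + s • G).det ^ (-β))
      ((-β * (A + t • G).det ^ (-β - 1)) *
        ((A + t • G).det * ((A + t • G)⁻¹ * G).trace)) t :=
    HasDerivAt.comp (h₂ := fun y : ℝ => y ^ (-β)) (h := fun s : ℝ => (A + s • G).det)
      t hr hdet
  have h1 : HasDerivAt (fun s : ℝ => ((A + s • G)ᵀ * (A + s • G)).trace)
      (0 + 2 * (Aᵀ * G).trace * 1 + (Gᵀ * G).trace * (2 * t ^ 1)) t := by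
    rw [show (fun s : ℝ => ((A + s • G)ᵀ * (A + s • G)).trace) =
        fun s => (Aᵀ * A).trace + 2 * (Aᵀ * G).trace * s + (Gᵀ * G).trace * s ^ 2
      from funext (trace_quad A G)]
    exact ((hasDerivAt_const t _).add ((hasDerivAt_id t).const_mul _)).add
      ((hasDerivAt_pow 2 t).const_mul _)
  have hE : HasDerivAt (fun s : ℝ => μ / 2 * (((A + s • G)ᵀ * (A + s • G)).trace - 3) +
      μ / β * ((A + s • G).det ^ (-β) - 1)) _ t := ((h1.sub_const 3).const_mul (μ / 2)).add ((h2.sub_const 1).const_mul (μ / β))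
  have hfun : (fun s : ℝ => neoHookeanEnergy μ β (A + s • G)) =
      fun s : ℝ => μ / 2 * (((A + s • G)ᵀ * (A + s • G)).trace - 3) +
        μ / β * ((A + s • G).det ^ (-β) - 1) := rfl
  rw [hfun]
  convert hE using 1
  have hMG : ((A + t • G)ᵀ * G).trace = (Aᵀ * G).trace + t * (Gᵀ * G).trace := by
    simp [Matrix.transpose_add, Matrix.transpose_smul, Matrix.add_mul, Matrix.smul_mul,
      Matrix.trace_add, Matrix.trace_smul, smul_eq_mul]
  have hpow : (A + t • G).det ^ (-β - 1) * (A + t • G).det = (A + t • G).det ^ (-β) := by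
    rw [Real.rpow_sub_one h.ne']
    field_simp
  simp only [firstPiolaKirchhoff, Matrix.transpose_smul, Matrix.transpose_sub,
    Matrix.transpose_transpose, Matrix.smul_mul, Matrix.sub_mul, Matrix.trace_smul,
    Matrix.trace_sub, smul_eq_mul, hMG]
  generalize ((A + t • G)⁻¹ * G).trace = n
  generalize (Aᵀ * G).trace = a
  generalize (Gᵀ * G).trace = g
  revert hpow
  generalize (A + t • G).det ^ (-β - 1) = r'
  generalize (A + t • G).det ^ (-β) = r
  generalize (A + t • G).det = d
  intro hpow
  field_simp
  linear_combination (2 * μ * n) * hpow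

abbrev E3 := EuclideanSpace ℝ (Fin 3)

lemma continuous_jacobianMatrix {u : E3 → E3} (hu : ContDiff ℝ 1 u) :
    Continuous (jacobianMatrix u) := by
  have hf : Continuous (fderiv ℝ u) := hu.continuous_fderiv one_ne_zero
  apply continuous_matrix
  intro i j
  exact (EuclideanSpace.proj i).continuous.comp (hf.clm_apply continuous_const)

lemma pk_trace_eq (μ β : ℝ) (M g : M3) (h : M.det ≠ 0) :
    ((firstPiolaKirchhoff μ β M)ᵀ * g).trace =
      μ * ((Mᵀ * g).trace - M.det ^ (-β) * (M.det⁻¹ * (M.adjugate * g).trace)) := by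
  have hMi : M⁻¹ = M.det⁻¹ • M.adjugate := by rw [Matrix.inv_def, Ring.inverse_eq_inv']
  simp only [firstPiolaKirchhoff, hMi, Matrix.transpose_smul, Matrix.transpose_sub,
    Matrix.transpose_transpose, Matrix.sub_mul, Matrix.smul_mul, Matrix.trace_sub,
    Matrix.trace_smul, smul_eq_mul]

set_option maxHeartbeats 1000000 in
/-- For `C¹` vector fields `u, w` on `ℝ³` with `det(1 + ∇u(x)) > 0` on the closure
of a bounded open set `Ω`, the map `ε ↦ ∫_Ω ψ₀(1 + ∇u + ε∇w)` is differentiable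
at `ε = 0` with derivative `∫_Ω trace(P₀(1 + ∇u)ᵀ ∇w)`: the first variation of the
stored elastic energy in the displacement direction `w`. -/
theorem storedEnergy_first_variation (μ β : ℝ) (hμ : 0 < μ) (hβ : β ≠ 0)
    (Ω : Set (EuclideanSpace ℝ (Fin 3))) (hΩo : IsOpen Ω)
    (hΩb : Bornology.IsBounded Ω)
    (u w : EuclideanSpace ℝ (Fin 3) → EuclideanSpace ℝ (Fin 3))
    (hu : ContDiff ℝ 1 u) (hw : ContDiff ℝ 1 w)
    (hdet : ∀ x ∈ closure Ω, 0 < (1 + jacobianMatrix u x).det) :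
    HasDerivAt
      (fun ε : ℝ => ∫ x in Ω,
        neoHookeanEnergy μ β (1 + jacobianMatrix u x + ε • jacobianMatrix w x))
      (∫ x in Ω,
        ((firstPiolaKirchhoff μ β (1 + jacobianMatrix u x))ᵀ *
          jacobianMatrix w x).trace)
      0 := by
  classical
  by_cases hΩE : Ω = ∅
  · subst hΩE
    simp only [Measure.restrict_empty, integral_zero_measure]
    exact hasDerivAt_const 0 0
  have hAc : Continuous fun x : E3 => 1 + jacobianMatrix u x :=
    continuous_const.add (continuous_jacobianMatrix hu)
  have hGc : Continuous (jacobianMatrix w) := continuous_jacobianMatrix hw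
  have hK : IsCompact (closure Ω) := hΩb.isCompact_closure
  have hKne : (closure Ω).Nonempty := (Set.nonempty_iff_ne_empty.2 hΩE).closure
  have hψc : Continuous fun x : E3 => (1 + jacobianMatrix u x).det := hAc.matrix_det
  obtain ⟨x₀, hx₀K, hmin⟩ := hK.exists_isMinOn hKne hψc.continuousOn
  set c : ℝ := (1 + jacobianMatrix u x₀).det / 2 with hcdef
  have hc : 0 < c := by
    have := hdet x₀ hx₀K
    simp only [hcdef]
    linarith
  have hΦc : Continuous fun p : ℝ × E3 =>
      (1 + jacobianMatrix u p.2 + p.1 • jacobianMatrix w p.2).det :=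
    ((hAc.comp continuous_snd).add (continuous_fst.smul (hGc.comp continuous_snd))).matrix_det
  have hO : IsOpen {p : ℝ × E3 |
      c < (1 + jacobianMatrix u p.2 + p.1 • jacobianMatrix w p.2).det} :=
    isOpen_lt continuous_const hΦc
  have hsub : ({(0 : ℝ)} : Set ℝ) ×ˢ closure Ω ⊆
      {p : ℝ × E3 | c < (1 + jacobianMatrix u p.2 + p.1 • jacobianMatrix w p.2).det} := by
    rintro ⟨e, x⟩ ⟨he, hx⟩
    simp only [Set.mem_singleton_iff] at he
    subst he
    have h1 : (1 + jacobianMatrix u x₀).det ≤ (1 + jacobianMatrix u x).det := hmin hx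
    simp only [Set.mem_setOf_eq, zero_smul, add_zero]
    simp only [hcdef]
    linarith
  obtain ⟨U, V, hU, hV, h0U, hKV, hUV⟩ :=
    generalized_tube_lemma isCompact_singleton hK hO hsub
  obtain ⟨δ, hδ, hball⟩ := Metric.isOpen_iff.1 hU 0 (h0U rfl)
  have hδ2 : 0 < δ / 2 := by linarith
  have hdet' : ∀ ε ∈ Metric.closedBall (0 : ℝ) (δ / 2), ∀ x ∈ closure Ω,
      c < (1 + jacobianMatrix u x + ε • jacobianMatrix w x).det := by
    intro ε hε x hx
    have hm : (ε, x) ∈ U ×ˢ V :=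
      Set.mk_mem_prod (hball (Metric.closedBall_subset_ball (by linarith) hε)) (hKV hx)
    have h2 := hUV hm
    simp only [Set.mem_setOf_eq] at h2
    exact h2
  have hScomp : IsCompact (Metric.closedBall (0 : ℝ) (δ / 2) ×ˢ closure Ω) :=
    (isCompact_closedBall _ _).prod hK
  have hMc : Continuous fun p : ℝ × E3 =>
      1 + jacobianMatrix u p.2 + p.1 • jacobianMatrix w p.2 :=
    (hAc.comp continuous_snd).add (continuous_fst.smul (hGc.comp continuous_snd))
  have hdetS : ∀ p ∈ Metric.closedBall (0 : ℝ) (δ / 2) ×ˢ closure Ω,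
      (1 + jacobianMatrix u p.2 + p.1 • jacobianMatrix w p.2).det ≠ 0 := by
    rintro ⟨ε, x⟩ ⟨hε, hx⟩
    exact (hc.trans (hdet' ε hε x hx)).ne'
  have hrpowS : ∀ q : ℝ, ContinuousOn
      (fun p : ℝ × E3 => (1 + jacobianMatrix u p.2 + p.1 • jacobianMatrix w p.2).det ^ q)
      (Metric.closedBall (0 : ℝ) (δ / 2) ×ˢ closure Ω) := by
    intro q p hp
    exact (ContinuousAt.comp (x := p)
      (Real.continuousAt_rpow_const _ q (Or.inl (hdetS p hp)))
      hΦc.continuousAt).continuousWithinAt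
  have hFc : ContinuousOn
      (fun p : ℝ × E3 =>
        neoHookeanEnergy μ β (1 + jacobianMatrix u p.2 + p.1 • jacobianMatrix w p.2))
      (Metric.closedBall (0 : ℝ) (δ / 2) ×ˢ closure Ω) := by
    have h1 : Continuous fun p : ℝ × E3 =>
        ((1 + jacobianMatrix u p.2 + p.1 • jacobianMatrix w p.2)ᵀ *
          (1 + jacobianMatrix u p.2 + p.1 • jacobianMatrix w p.2)).trace :=
      (hMc.matrix_transpose.matrix_mul hMc).matrix_trace
    exact (((h1.continuousOn.sub (continuousOn_const (c := (3:ℝ)))).const_smul (μ / 2)).add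
      (((hrpowS (-β)).sub (continuousOn_const (c := (1:ℝ)))).const_smul (μ / β))).congr
      fun p hp => by simp only [neoHookeanEnergy, smul_eq_mul, Pi.add_apply, Pi.smul_apply, Pi.sub_apply]
  have hF'c : ContinuousOn (fun p : ℝ × E3 =>
      ((firstPiolaKirchhoff μ β
        (1 + jacobianMatrix u p.2 + p.1 • jacobianMatrix w p.2))ᵀ *
        jacobianMatrix w p.2).trace)
      (Metric.closedBall (0 : ℝ) (δ / 2) ×ˢ closure Ω) := by
    have h1 : Continuous fun p : ℝ × E3 =>
        ((1 + jacobianMatrix u p.2 + p.1 • jacobianMatrix w p.2)ᵀ *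
          jacobianMatrix w p.2).trace :=
      (hMc.matrix_transpose.matrix_mul (hGc.comp continuous_snd)).matrix_trace
    have h2 : Continuous fun p : ℝ × E3 =>
        ((1 + jacobianMatrix u p.2 + p.1 • jacobianMatrix w p.2).adjugate *
          jacobianMatrix w p.2).trace :=
      (hMc.matrix_adjugate.matrix_mul (hGc.comp continuous_snd)).matrix_trace
    have h3 : ContinuousOn (fun p : ℝ × E3 =>
        ((1 + jacobianMatrix u p.2 + p.1 • jacobianMatrix w p.2).det)⁻¹)
        (Metric.closedBall (0 : ℝ) (δ / 2) ×ˢ closure Ω) :=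
      hΦc.continuousOn.inv₀ hdetS
    exact ((h1.continuousOn.sub
      ((hrpowS (-β)).mul (h3.mul h2.continuousOn))).const_smul μ).congr fun p hp => by
        rw [pk_trace_eq μ β _ _ (hdetS p hp)]
        simp only [smul_eq_mul, Pi.smul_apply, Pi.sub_apply, Pi.mul_apply]
  obtain ⟨C, hC⟩ := hScomp.exists_bound_of_continuousOn hF'c
  have key := hasDerivAt_integral_of_dominated_loc_of_deriv_le (μ := volume.restrict Ω)
    (𝕜 := ℝ)
    (F := fun ε x => neoHookeanEnergy μ β
      (1 + jacobianMatrix u x + ε • jacobianMatrix w x))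
    (F' := fun ε x => ((firstPiolaKirchhoff μ β
      (1 + jacobianMatrix u x + ε • jacobianMatrix w x))ᵀ * jacobianMatrix w x).trace)
    (x₀ := (0 : ℝ)) (bound := fun _ => C) (Metric.ball_mem_nhds 0 hδ2)
    ?_ ?_ ?_ ?_ ?_ ?_
  · have h0 : (fun x => ((firstPiolaKirchhoff μ β
        (1 + jacobianMatrix u x + (0:ℝ) • jacobianMatrix w x))ᵀ *
        jacobianMatrix w x).trace)
        = fun x => ((firstPiolaKirchhoff μ β (1 + jacobianMatrix u x))ᵀ *
          jacobianMatrix w x).trace := by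
      funext x
      simp only [zero_smul, add_zero]
    rw [h0] at key
    exact key.2
  · filter_upwards [Metric.closedBall_mem_nhds (0 : ℝ) hδ2] with ε hε
    have hcont : ContinuousOn (fun x => neoHookeanEnergy μ β
        (1 + jacobianMatrix u x + ε • jacobianMatrix w x)) Ω :=
      hFc.comp (f := fun x : E3 => (ε, x)) (Continuous.continuousOn (Continuous.prodMk_right ε))
        fun x hx => Set.mk_mem_prod hε (subset_closure hx)
    exact hcont.aestronglyMeasurable hΩo.measurableSet
  · have hcont : ContinuousOn (fun x => neoHookeanEnergy μ β
        (1 + jacobianMatrix u x + (0:ℝ) • jacobianMatrix w x)) (closure Ω) :=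
      hFc.comp (f := fun x : E3 => ((0:ℝ), x)) (Continuous.continuousOn (Continuous.prodMk_right (0:ℝ)))
        fun x hx => Set.mk_mem_prod (Metric.mem_closedBall_self hδ2.le) hx
    exact (hcont.integrableOn_compact hK).mono_set subset_closure
  · have hcont : ContinuousOn
        (fun x => ((firstPiolaKirchhoff μ β
          (1 + jacobianMatrix u x + (0:ℝ) • jacobianMatrix w x))ᵀ *
          jacobianMatrix w x).trace) Ω :=
      hF'c.comp (f := fun x : E3 => ((0:ℝ), x)) (Continuous.continuousOn (Continuous.prodMk_right (0:ℝ)))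
        fun x hx => Set.mk_mem_prod (Metric.mem_closedBall_self hδ2.le) (subset_closure hx)
    exact hcont.aestronglyMeasurable hΩo.measurableSet
  · refine (ae_restrict_mem hΩo.measurableSet).mono fun x hx ε hε => ?_
    exact hC (ε, x) (Set.mk_mem_prod (Metric.ball_subset_closedBall hε) (subset_closure hx))
  · exact integrableOn_const hΩb.measure_lt_top.ne
  · refine (ae_restrict_mem hΩo.measurableSet).mono fun x hx ε hε => ?_
    exact hasDerivAt_energy_line μ β hβ (1 + jacobianMatrix u x) (jacobianMatrix w x) ε
      (hc.trans (hdet' ε (Metric.ball_subset_closedBall hε) x (subset_closure hx)))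
end
end
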